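/- Let s : T → ℝ and α ∈ ℝ, and define α(D, i_D) = Σ_{F∈𝒟, F⊇D} Σ_{j_F∈I_F* : (j_F)_D = i_D} (−1)^{|F∖D|} s(F, j_F) for (D, i_D) ∈ T, and α_∅ = α + Σ_{(D,i_D)∈T} (−1)^{|D|} s(D, i_D). Then the induced hyperparameters sum to the total: α_∅ + Σ_{(D,i_D)∈T} α(D, i_D) = α. -/

import Mathlib

open Finset MeasureTheory

/-- The cell equal to `i` on `F` and to the baseline `b` off `F`. -/
def cellOn {V : Type} [DecidableEq V] {I : V → Type} (b : ∀ γ, I γ)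
    (F : Finset V) (i : ∀ γ, I γ) : ∀ γ, I γ :=
  fun γ => if γ ∈ F then i γ else b γ

/-- The support of a cell: the set of coordinates that are off baseline. -/
def cellSupport {V : Type} [Fintype V] [DecidableEq V] {I : V → Type}
    [∀ γ, DecidableEq (I γ)] (b : ∀ γ, I γ) (j : ∀ γ, I γ) : Finset V :=
  Finset.univ.filter (fun γ => j γ ≠ b γ)

/-- A generating class: a nonempty collection of nonempty subsets of `V` closed
under nonempty subsets. -/
def IsGenClass {V : Type} [DecidableEq V] (𝒟 : Finset (Finset V)) : Prop :=
  𝒟.Nonempty ∧ (∀ D ∈ 𝒟, D ≠ ∅) ∧ ∀ D ∈ 𝒟, ∀ F ⊆ D, F ≠ ∅ → F ∈ 𝒟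

/-- The index set `T = {(D, i_D) : D ∈ 𝒟, i_D ∈ I_D*}`; a tuple `i_D ∈ I_D*` is
represented by the unique cell whose support is exactly `D`. -/
def TParam {V : Type} [Fintype V] [DecidableEq V] (I : V → Type)
    [∀ γ, DecidableEq (I γ)] (b : ∀ γ, I γ) (𝒟 : Finset (Finset V)) : Type :=
  {x : Finset V × (∀ γ, I γ) // x.1 ∈ 𝒟 ∧ cellSupport b x.2 = x.1}

noncomputable instance {V : Type} [Fintype V] [DecidableEq V] (I : V → Type)
    [∀ γ, Fintype (I γ)] [∀ γ, DecidableEq (I γ)] (b : ∀ γ, I γ)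
    (𝒟 : Finset (Finset V)) : Fintype (TParam I b 𝒟) := by
  unfold TParam; infer_instance

instance {V : Type} [Fintype V] [DecidableEq V] (I : V → Type)
    [∀ γ, DecidableEq (I γ)] (b : ∀ γ, I γ)
    (𝒟 : Finset (Finset V)) : DecidableEq (TParam I b 𝒟) := by
  unfold TParam; infer_instance

/-- The exponent `Σ_{F ∈ 𝒟, F ⊆ S(j)} θ(F, j_F)` of the hierarchical model. -/
noncomputable def energy {V : Type} [Fintype V] [DecidableEq V] {I : V → Type}
    [∀ γ, Fintype (I γ)] [∀ γ, DecidableEq (I γ)] (b : ∀ γ, I γ)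
    (𝒟 : Finset (Finset V)) (θ : TParam I b 𝒟 → ℝ) (j : ∀ γ, I γ) : ℝ :=
  ∑ t : TParam I b 𝒟, if t.1.2 = cellOn b t.1.1 j then θ t else 0

/-- The partition function `Z(θ)`. -/
noncomputable def Zfun {V : Type} [Fintype V] [DecidableEq V] {I : V → Type}
    [∀ γ, Fintype (I γ)] [∀ γ, DecidableEq (I γ)] (b : ∀ γ, I γ)
    (𝒟 : Finset (Finset V)) (θ : TParam I b 𝒟 → ℝ) : ℝ :=
  ∑ j : (∀ γ, I γ), Real.exp (energy b 𝒟 θ j)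

/-- The log-partition function `k(θ) = log Z(θ)`. -/
noncomputable def kfun {V : Type} [Fintype V] [DecidableEq V] {I : V → Type}
    [∀ γ, Fintype (I γ)] [∀ γ, DecidableEq (I γ)] (b : ∀ γ, I γ)
    (𝒟 : Finset (Finset V)) (θ : TParam I b 𝒟 → ℝ) : ℝ :=
  Real.log (Zfun b 𝒟 θ)

/-- The hierarchical log-linear probability function `p_θ`. -/
noncomputable def phier {V : Type} [Fintype V] [DecidableEq V] {I : V → Type}
    [∀ γ, Fintype (I γ)] [∀ γ, DecidableEq (I γ)] (b : ∀ γ, I γ)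
    (𝒟 : Finset (Finset V)) (θ : TParam I b 𝒟 → ℝ) (j : ∀ γ, I γ) : ℝ :=
  Real.exp (energy b 𝒟 θ j) / Zfun b 𝒟 θ

/- Swapping the double sum, `s(F, j_F)` is weighted by `Σ (-1)^{|F \ D|}` over the `(D, i_D) ∈ T`
below `(F, j_F)`. Since `𝒟` is closed under nonempty subsets, these are exactly the restrictions
`(D, (j_F)_D)` for `∅ ≠ D ⊆ F`, so the weight is the alternating sum over all `D ⊆ F`, which
vanishes, minus its `D = ∅` term `(-1)^{|F|}`. This cancels the sum in `α_∅`. -/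

theorem Finset.sum_powerset_neg_one_pow_card_sdiff_of_nonempty {R α : Type*} [CommRing R]
    [DecidableEq α] {F : Finset α} (hF : F.Nonempty) :
    ∑ D ∈ F.powerset, (-1 : R) ^ #(F \ D) = 0 := by
  have hflip : ∀ D ∈ F.powerset, (-1 : R) ^ #(F \ D) = (-1) ^ #F * (-1) ^ #D := by
    intro D hD
    rw [← card_sdiff_add_card_eq_card (mem_powerset.1 hD), pow_add, mul_assoc, ← pow_add,
      Even.neg_one_pow ⟨_, rfl⟩, mul_one]
  have hsum := congrArg (Int.cast : ℤ → R) (sum_powerset_neg_one_pow_card_of_nonempty hF)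
  push_cast at hsum
  rw [sum_congr rfl hflip, ← mul_sum, hsum, mul_zero]

theorem Finset.sum_erase_empty_powerset_neg_one_pow_card_sdiff {R α : Type*} [CommRing R]
    [DecidableEq α] {F : Finset α} (hF : F.Nonempty) :
    ∑ D ∈ F.powerset.erase ∅, (-1 : R) ^ #(F \ D) = -(-1) ^ #F := by
  rw [sum_erase_eq_sub (empty_mem_powerset F), sum_powerset_neg_one_pow_card_sdiff_of_nonempty hF,
    sdiff_empty, zero_sub]

section Cells

variable {V : Type} [DecidableEq V] {I : V → Type} (b : ∀ γ, I γ)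

theorem cellOn_congr {D : Finset V} {i j : ∀ γ, I γ} (h : ∀ γ ∈ D, i γ = j γ) :
    cellOn b D i = cellOn b D j := by
  funext γ
  by_cases hγ : γ ∈ D <;> simp [cellOn, hγ, h]

theorem cellOn_apply_of_mem {D : Finset V} (j : ∀ γ, I γ) {γ : V} (hγ : γ ∈ D) :
    cellOn b D j γ = j γ :=
  if_pos hγ

variable [Fintype V] [∀ γ, DecidableEq (I γ)]

theorem cellOn_cellSupport (j : ∀ γ, I γ) : cellOn b (cellSupport b j) j = j := by
  funext γ
  by_cases hγ : j γ = b γ <;> simp [cellOn, cellSupport, hγ]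

theorem cellSupport_cellOn (D : Finset V) (j : ∀ γ, I γ) :
    cellSupport b (cellOn b D j) = D ∩ cellSupport b j := by
  ext γ
  by_cases hγ : γ ∈ D <;> simp [cellOn, cellSupport, hγ]

end Cells

namespace TParam

variable {V : Type} [Fintype V] [DecidableEq V] {I : V → Type} [∀ γ, DecidableEq (I γ)]
  {b : ∀ γ, I γ} {𝒟 : Finset (Finset V)}

/-- `(D, (j_F)_D)` for `(F, j_F) ∈ T` and `D ∈ 𝒟` with `D ⊆ F`. -/
def restrict (t : TParam I b 𝒟) (D : Finset V) (hD𝒟 : D ∈ 𝒟) (hD : D ⊆ t.1.1) : TParam I b 𝒟 :=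
  ⟨(D, cellOn b D t.1.2), hD𝒟, by rw [cellSupport_cellOn, t.2.2, inter_eq_left.2 hD]⟩

theorem eq_restrict {t t' : TParam I b 𝒟} (hD : t.1.1 ⊆ t'.1.1)
    (hagree : ∀ γ ∈ t.1.1, t'.1.2 γ = t.1.2 γ) : t = t'.restrict t.1.1 t.2.1 hD := by
  refine Subtype.ext (Prod.ext rfl ?_)
  change t.1.2 = cellOn b t.1.1 t'.1.2
  rw [cellOn_congr b hagree]
  conv_lhs => rw [← cellOn_cellSupport b t.1.2]
  rw [t.2.2]

variable [∀ γ, Fintype (I γ)]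

theorem sum_below_neg_one_pow_card_sdiff (h𝒟 : IsGenClass 𝒟) (t' : TParam I b 𝒟) :
    ∑ t ∈ univ.filter (fun t : TParam I b 𝒟 =>
        t.1.1 ⊆ t'.1.1 ∧ ∀ γ ∈ t.1.1, t'.1.2 γ = t.1.2 γ),
      (-1 : ℝ) ^ #(t'.1.1 \ t.1.1) = -(-1) ^ #t'.1.1 := by
  obtain ⟨-, hne, hsub⟩ := h𝒟
  have hF : t'.1.1.Nonempty := nonempty_iff_ne_empty.2 (hne _ t'.2.1)
  rw [← sum_erase_empty_powerset_neg_one_pow_card_sdiff hF]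
  refine sum_nbij (fun t => t.1.1) ?_ ?_ ?_ (fun _ _ => rfl)
  · intro t ht
    simp only [mem_filter, mem_univ, true_and] at ht
    exact mem_erase.2 ⟨hne _ t.2.1, mem_powerset.2 ht.1⟩
  · intro t₁ ht₁ t₂ ht₂ h
    simp only [coe_filter, mem_univ, true_and, Set.mem_ofPred_eq] at ht₁ ht₂
    rw [eq_restrict ht₁.1 ht₁.2, eq_restrict ht₂.1 ht₂.2]
    exact Subtype.ext (by simp only [restrict, h])
  · intro D hD
    obtain ⟨hD₀, hDF⟩ := mem_erase.1 hD
    rw [mem_powerset] at hDF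
    refine ⟨t'.restrict D (hsub _ t'.2.1 D hDF hD₀) hDF, ?_, rfl⟩
    simp only [coe_filter, mem_univ, true_and, Set.mem_ofPred_eq]
    exact ⟨hDF, fun γ hγ => (cellOn_apply_of_mem b _ hγ).symm⟩

end TParam

/-- The induced hyperparameters sum to the total: `α_∅ + Σ_{(D,i_D)∈T} α(D,i_D) = α`,
where `α(D,i_D) = Σ_{F∈𝒟,F⊇D} Σ_{j_F∈I_F*:(j_F)_D=i_D} (−1)^{|F∖D|} s(F,j_F)` and
`α_∅ = α + Σ_{(D,i_D)∈T} (−1)^{|D|} s(D,i_D)`. -/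
theorem hyperparams_sum_to_total {V : Type} [Fintype V] [DecidableEq V]
    {I : V → Type} [∀ γ, Fintype (I γ)] [∀ γ, DecidableEq (I γ)]
    (b : ∀ γ, I γ) (𝒟 : Finset (Finset V)) (h𝒟 : IsGenClass 𝒟)
    (s : TParam I b 𝒟 → ℝ) (α : ℝ) :
    (α + ∑ t : TParam I b 𝒟, (-1 : ℝ) ^ t.1.1.card * s t) +
      ∑ t : TParam I b 𝒟,
        (∑ t' ∈ Finset.univ.filter
            (fun t' : TParam I b 𝒟 =>
              t.1.1 ⊆ t'.1.1 ∧ ∀ γ ∈ t.1.1, t'.1.2 γ = t.1.2 γ),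
          (-1 : ℝ) ^ (t'.1.1 \ t.1.1).card * s t') = α := by
  rw [sum_comm' (t' := univ) (s' := fun t' => univ.filter fun t : TParam I b 𝒟 =>
      t.1.1 ⊆ t'.1.1 ∧ ∀ γ ∈ t.1.1, t'.1.2 γ = t.1.2 γ) (by simp)]
  simp only [← sum_mul, TParam.sum_below_neg_one_pow_card_sdiff h𝒟, neg_mul, sum_neg_distrib]
  ring
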